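/- arXiv:2102.11503 — 6 statements merged into one kernel-verified Lean document; each statement's English description precedes it below -/
import Mathlib

section
/- Suppose each class appearance probability satisfies p_i ≥ γn/L for some γ ∈ (0,1]. If N tuples are drawn i.i.d. from μ and Z denotes the number of distinct classes of {1,…,L} appearing in at least one of the N drawn tuples, then P(Z ≤ L/2) ≤ 2·(1 − γn/L)^N. -/
open MeasureTheory ProbabilityTheory

/-- Suppose each class appearance probability satisfies `p_i ≥ γn/L` for
some `γ ∈ (0,1]`. If `N` tuples are drawn i.i.d. from `μ` and `Z` is the number of distinct
classes appearing in at least one of the drawn tuples, then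
`P(Z ≤ L/2) ≤ 2·(1 − γn/L)^N`. -/
theorem prob_few_observed_classes_le
    (L n N : ℕ) (hL : 1 ≤ L) (hn : 1 ≤ n) (hnL : n ≤ L) (hN : 1 ≤ N)
    (γ : ℝ) (hγ : γ ∈ Set.Ioc (0 : ℝ) 1)
    (μ : Measure {c : Fin n → Fin L // Function.Injective c}) [IsProbabilityMeasure μ]
    (hp : ∀ i : Fin L,
      γ * n / L ≤ (μ {c | ∃ k, (c : Fin n → Fin L) k = i}).toReal)
    {Ω : Type*} [MeasurableSpace Ω] (P : Measure Ω) [IsProbabilityMeasure P]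
    (X : Fin N → Ω → {c : Fin n → Fin L // Function.Injective c})
    (hmeas : ∀ j, Measurable (X j))
    (hlaw : ∀ j, Measure.map (X j) P = μ)
    (hindep : iIndepFun X P)
    (Z : Ω → ℕ)
    (hZ : ∀ ω, Z ω = Set.ncard {i : Fin L | ∃ j : Fin N, ∃ k : Fin n,
      (X j ω : Fin n → Fin L) k = i}) :
    (P {ω | (Z ω : ℝ) ≤ L / 2}).toReal ≤ 2 * (1 - γ * n / L) ^ N := by
  obtain ⟨hγ0, hγ1⟩ := hγ
  have hL0 : (0:ℝ) < L := by exact_mod_cast hL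
  set q : ℝ := 1 - γ * n / L with hqdef
  have hq0 : 0 ≤ q := by
    have h1 : γ * n ≤ L := by
      have h2 : γ * n ≤ 1 * n :=
        mul_le_mul_of_nonneg_right hγ1 (by positivity)
      have hnL' : (n:ℝ) ≤ L := by exact_mod_cast hnL
      linarith
    have : γ * n / L ≤ 1 := by rw [div_le_one hL0]; exact h1
    simp only [hqdef]; linarith
  -- the "class i never appears" set
  set A : Fin L → Set {c : Fin n → Fin L // Function.Injective c} :=
    fun i => {c | ∃ k, (c : Fin n → Fin L) k = i}ᶜ with hAdef
  have hBmeas : ∀ i : Fin L,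
      MeasurableSet {c : {c : Fin n → Fin L // Function.Injective c} |
        ∃ k, (c : Fin n → Fin L) k = i} :=
    fun i => Set.Finite.measurableSet (Set.toFinite _)
  have hAmeas : ∀ i, MeasurableSet (A i) := fun i => (hBmeas i).compl
  have hμA : ∀ i, μ (A i) ≤ ENNReal.ofReal q := by
    intro i
    have hcompl : μ (A i) = 1 - μ {c | ∃ k, (c : Fin n → Fin L) k = i} :=
      prob_compl_eq_one_sub (hBmeas i)
    rw [ENNReal.le_ofReal_iff_toReal_le (measure_ne_top _ _) hq0, hcompl,
      ENNReal.toReal_sub_of_le prob_le_one (by simp), ENNReal.toReal_one]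
    have := hp i
    simp only [hqdef]
    linarith
  set U : Fin L → Set Ω := fun i => ⋂ j, X j ⁻¹' A i with hUdef
  have hUmeas : ∀ i, MeasurableSet (U i) :=
    fun i => MeasurableSet.iInter fun j => (hmeas j) (hAmeas i)
  have hPU : ∀ i, P (U i) ≤ ENNReal.ofReal q ^ N := by
    intro i
    have key := hindep.measure_inter_preimage_eq_mul (S := Finset.univ)
      (sets := fun _ => A i) (fun j _ => hAmeas i)
    have hmap : ∀ j, P (X j ⁻¹' A i) = μ (A i) := fun j => by
      rw [← hlaw j, Measure.map_apply (hmeas j) (hAmeas i)]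
    have hUeq : P (U i) = μ (A i) ^ N := by
      simp only [hUdef]
      rw [show (⋂ j, X j ⁻¹' A i) = ⋂ j ∈ Finset.univ, X j ⁻¹' A i by simp,
        key]
      simp [hmap]
    rw [hUeq]
    exact pow_le_pow_left' (hμA i) N
  -- the counting function
  classical
  set f : Ω → ENNReal := fun ω => ∑ i : Fin L, (U i).indicator (fun _ => 1) ω with hfdef
  have hfmeas : Measurable f :=
    Finset.measurable_sum _ fun i _ => (measurable_const.indicator (hUmeas i))
  have hlint : ∫⁻ ω, f ω ∂P = ∑ i : Fin L, P (U i) := by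
    simp only [hfdef]
    rw [lintegral_finset_sum _ fun i _ => measurable_const.indicator (hUmeas i)]
    refine Finset.sum_congr rfl fun i _ => ?_
    rw [show ((U i).indicator (fun _ => (1:ENNReal))) = (U i).indicator 1 from rfl]
    exact lintegral_indicator_one (hUmeas i)
  have hlint_le : ∫⁻ ω, f ω ∂P ≤ L * ENNReal.ofReal q ^ N := by
    rw [hlint]
    calc ∑ i : Fin L, P (U i) ≤ ∑ _i : Fin L, ENNReal.ofReal q ^ N :=
          Finset.sum_le_sum fun i _ => hPU i
      _ = L * ENNReal.ofReal q ^ N := by simp [mul_comm]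
  -- pointwise lower bound for f on the bad set
  have hfval : ∀ ω, f ω = ((L - Z ω : ℕ) : ENNReal) := by
    intro ω
    have hmem : ∀ i : Fin L,
        ω ∈ U i ↔ ¬ ∃ j k, (X j ω : Fin n → Fin L) k = i := by
      intro i
      simp only [hUdef, Set.mem_iInter, Set.mem_preimage, hAdef, Set.mem_compl_iff,
        Set.mem_setOf_eq]
      aesop
    have hZω : Z ω = (Finset.univ.filter fun i : Fin L =>
        ∃ j k, (X j ω : Fin n → Fin L) k = i).card := by
      rw [hZ ω, Set.ncard_eq_toFinset_card', Set.toFinset_setOf]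
    have hfcard : f ω =
        ((Finset.univ.filter fun i : Fin L => ω ∈ U i).card : ENNReal) := by
      simp only [hfdef, Set.indicator_apply]
      rw [Finset.sum_boole]
    have hcard : (Finset.univ.filter fun i : Fin L => ω ∈ U i).card = L - Z ω := by
      have h1 : (Finset.univ.filter fun i : Fin L => ω ∈ U i) =
          Finset.univ.filter fun i : Fin L =>
            ¬ ∃ j k, (X j ω : Fin n → Fin L) k = i := by
        apply Finset.filter_congr
        intro i _
        rw [hmem i]
      have h2 := Finset.card_filter_add_card_filter_not
        (s := (Finset.univ : Finset (Fin L)))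
        (p := fun i : Fin L => ∃ j k, (X j ω : Fin n → Fin L) k = i)
      simp only [Finset.card_univ, Fintype.card_fin] at h2
      rw [h1, hZω]
      omega
    rw [hfcard, hcard]
  have hsubset : {ω | (Z ω : ℝ) ≤ L / 2} ⊆ {ω | (L : ENNReal) / 2 ≤ f ω} := by
    intro ω hω
    simp only [Set.mem_setOf_eq] at hω ⊢
    have hZle : Z ω ≤ L := by
      have : (Z ω : ℝ) ≤ L := le_trans hω (by linarith)
      exact_mod_cast this
    have hreal : (L : ℝ) / 2 ≤ ((L - Z ω : ℕ) : ℝ) := by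
      rw [Nat.cast_sub hZle]; linarith
    rw [hfval ω]
    calc (L : ENNReal) / 2 = ENNReal.ofReal ((L : ℝ) / 2) := by
          rw [ENNReal.ofReal_div_of_pos (by norm_num)]
          simp
      _ ≤ ENNReal.ofReal ((L - Z ω : ℕ) : ℝ) := ENNReal.ofReal_le_ofReal hreal
      _ = ((L - Z ω : ℕ) : ENNReal) := ENNReal.ofReal_natCast _
  -- Markov
  have hmarkov : (L : ENNReal) / 2 * P {ω | (Z ω : ℝ) ≤ L / 2} ≤
      L * ENNReal.ofReal q ^ N := by
    calc (L : ENNReal) / 2 * P {ω | (Z ω : ℝ) ≤ L / 2}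
        ≤ (L : ENNReal) / 2 * P {ω | (L : ENNReal) / 2 ≤ f ω} :=
          mul_le_mul_right (measure_mono hsubset) _
      _ ≤ ∫⁻ ω, f ω ∂P := mul_meas_ge_le_lintegral₀ hfmeas.aemeasurable _
      _ ≤ L * ENNReal.ofReal q ^ N := hlint_le
  have hfin : P {ω | (Z ω : ℝ) ≤ L / 2} ≤ ENNReal.ofReal (2 * q ^ N) := by
    have hLne : (L : ENNReal) ≠ 0 := by
      exact_mod_cast Nat.one_le_iff_ne_zero.mp hL
    have hε0 : (L : ENNReal) / 2 ≠ 0 := by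
      simp [ENNReal.div_eq_zero_iff, hLne]
    have hεtop : (L : ENNReal) / 2 ≠ ⊤ := by
      simp [ENNReal.div_eq_top]
    have h2 : (L : ENNReal) / 2 * (2 * ENNReal.ofReal q ^ N) =
        L * ENNReal.ofReal q ^ N := by
      rw [← mul_assoc, ENNReal.div_mul_cancel (by norm_num) (by norm_num)]
    have hmul : (L : ENNReal) / 2 * P {ω | (Z ω : ℝ) ≤ L / 2} ≤
        (L : ENNReal) / 2 * (2 * ENNReal.ofReal q ^ N) := by
      rw [h2]; exact hmarkov
    have := (ENNReal.mul_le_mul_iff_right hε0 hεtop).mp hmul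
    calc P {ω | (Z ω : ℝ) ≤ L / 2} ≤ 2 * ENNReal.ofReal q ^ N := this
      _ = ENNReal.ofReal (2 * q ^ N) := by
          rw [ENNReal.ofReal_mul (by norm_num), ← ENNReal.ofReal_pow hq0]
          norm_num
  have := ENNReal.toReal_le_of_le_ofReal (by positivity) hfin
  simpa [hqdef] using this
end

section
/- Suppose each class appearance probability satisfies p_i ≥ γn/L for some γ ∈ (0,1]. Draw N_tr train tuples and N_te test tuples, all mutually independent, each with law μ; let Z_tr and Z_te be the numbers of distinct classes observed among the train tuples and among the test tuples respectively, and let I_tr and I_te be the corresponding sets of observed classes. Then P(I_tr ∩ I_te = ∅) ≤ P(Z_tr + Z_te ≤ L) ≤ 4·(1 − γn/L)^{min(N_tr, N_te)}. -/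
open MeasureTheory ProbabilityTheory
open ENNReal

private lemma filter_card_aux (L : ℕ) (s : Set (Fin L)) [DecidablePred (· ∈ s)] :
    (Finset.univ.filter (fun i => i ∉ s)).card + s.ncard = L := by
  classical
  rw [Set.ncard_eq_toFinset_card']
  have h : Finset.univ.filter (fun i => i ∉ s) = s.toFinsetᶜ := by ext i; simp
  rw [h, Finset.card_compl, Fintype.card_fin]
  have h2 : s.toFinset.card ≤ L := by simpa using Finset.card_le_univ s.toFinset
  omega

/-- Suppose each class appearance probability satisfies `p_i ≥ γn/L` for
some `γ ∈ (0,1]`. Draw `N_tr` train tuples and `N_te` test tuples, all mutually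
independent, each with law `μ`; let `Z_tr`, `Z_te` be the numbers of distinct classes
observed among the train/test tuples and `I_tr`, `I_te` the corresponding sets of observed
classes. Then
`P(I_tr ∩ I_te = ∅) ≤ P(Z_tr + Z_te ≤ L) ≤ 4·(1 − γn/L)^{min(N_tr, N_te)}`. -/
theorem prob_disjoint_train_test_classes_le
    (L n Ntr Nte : ℕ) (hL : 1 ≤ L) (hn : 1 ≤ n) (hnL : n ≤ L)
    (hNtr : 1 ≤ Ntr) (hNte : 1 ≤ Nte)
    (γ : ℝ) (hγ : γ ∈ Set.Ioc (0 : ℝ) 1)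
    (μ : Measure {c : Fin n → Fin L // Function.Injective c}) [IsProbabilityMeasure μ]
    (hp : ∀ i : Fin L,
      γ * n / L ≤ (μ {c | ∃ k, (c : Fin n → Fin L) k = i}).toReal)
    {Ω : Type*} [MeasurableSpace Ω] (P : Measure Ω) [IsProbabilityMeasure P]
    (Xtr : Fin Ntr → Ω → {c : Fin n → Fin L // Function.Injective c})
    (Xte : Fin Nte → Ω → {c : Fin n → Fin L // Function.Injective c})
    (hmeas_tr : ∀ j, Measurable (Xtr j)) (hmeas_te : ∀ j, Measurable (Xte j))
    (hlaw_tr : ∀ j, Measure.map (Xtr j) P = μ)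
    (hlaw_te : ∀ j, Measure.map (Xte j) P = μ)
    (hindep : iIndepFun (Sum.elim Xtr Xte) P)
    (Itr Ite : Ω → Set (Fin L))
    (hItr : ∀ ω, Itr ω = {i : Fin L | ∃ j : Fin Ntr, ∃ k : Fin n,
      (Xtr j ω : Fin n → Fin L) k = i})
    (hIte : ∀ ω, Ite ω = {i : Fin L | ∃ j : Fin Nte, ∃ k : Fin n,
      (Xte j ω : Fin n → Fin L) k = i})
    (Ztr Zte : Ω → ℕ)
    (hZtr : ∀ ω, Ztr ω = (Itr ω).ncard) (hZte : ∀ ω, Zte ω = (Ite ω).ncard) :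
    (P {ω | Itr ω ∩ Ite ω = ∅}).toReal ≤ (P {ω | Ztr ω + Zte ω ≤ L}).toReal ∧
    (P {ω | Ztr ω + Zte ω ≤ L}).toReal ≤ 4 * (1 - γ * n / L) ^ min Ntr Nte := by
  classical
  set q : ℝ := γ * n / L with hq_def
  have hq0 : 0 < q := by
    apply div_pos (mul_pos hγ.1 (by exact_mod_cast hn)) (by exact_mod_cast hL)
  have hq1 : q ≤ 1 := by
    rw [hq_def, div_le_one (by exact_mod_cast hL : (0:ℝ) < L)]
    calc γ * n ≤ 1 * n := by
          apply mul_le_mul_of_nonneg_right hγ.2 (by positivity)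
      _ ≤ L := by simpa using (by exact_mod_cast hnL : (n:ℝ) ≤ L)
  set A : Fin L → Set {c : Fin n → Fin L // Function.Injective c} := fun i => {c | ∃ k, (c : Fin n → Fin L) k = i} with hA
  have hAm : ∀ i, MeasurableSet (A i)ᶜ := fun i => (Set.to_countable _).measurableSet
  have hμA : ∀ i, (μ (A i)ᶜ).toReal ≤ 1 - q := by
    intro i
    have h1 : μ (A i)ᶜ = 1 - μ (A i) := by
      rw [measure_compl ((Set.to_countable _).measurableSet) (measure_ne_top μ _)]
      simp
    have h2 : μ (A i) ≤ 1 := prob_le_one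
    rw [h1, ENNReal.toReal_sub_of_le h2 (by simp)]
    simp only [ENNReal.toReal_one]
    linarith [hp i]
  -- event sets
  set Btr : Fin L → Set Ω := fun i => ⋂ j, Xtr j ⁻¹' (A i)ᶜ with hBtr
  set Bte : Fin L → Set Ω := fun i => ⋂ j, Xte j ⁻¹' (A i)ᶜ with hBte
  have hBtr_eq : ∀ i, {ω | i ∉ Itr ω} = Btr i := by
    intro i; ext ω
    simp only [hItr, Set.mem_setOf_eq, hBtr, Set.mem_iInter, Set.mem_preimage,
      Set.mem_compl_iff, hA]
    push_neg
    constructor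
    · intro h j k; exact h j k
    · intro h j k; exact h j k
  have hBte_eq : ∀ i, {ω | i ∉ Ite ω} = Bte i := by
    intro i; ext ω
    simp only [hIte, Set.mem_setOf_eq, hBte, Set.mem_iInter, Set.mem_preimage,
      Set.mem_compl_iff, hA]
    push_neg
    constructor
    · intro h j k; exact h j k
    · intro h j k; exact h j k
  have hBtrm : ∀ i, MeasurableSet (Btr i) :=
    fun i => MeasurableSet.iInter fun j => (hmeas_tr j) (hAm i)
  have hBtem : ∀ i, MeasurableSet (Bte i) :=
    fun i => MeasurableSet.iInter fun j => (hmeas_te j) (hAm i)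
  -- independence computation
  have hPBtr : ∀ i, P (Btr i) = (μ (A i)ᶜ) ^ Ntr := by
    intro i
    set sets : (Fin Ntr ⊕ Fin Nte) → Set {c : Fin n → Fin L // Function.Injective c} := Sum.elim (fun _ => (A i)ᶜ) (fun _ => Set.univ)
      with hsets
    have hm : ∀ x ∈ (Finset.univ.image Sum.inl : Finset (Fin Ntr ⊕ Fin Nte)),
        MeasurableSet (sets x) := by
      rintro (j | j) _
      · exact hAm i
      · exact MeasurableSet.univ
    have key := hindep.measure_inter_preimage_eq_mul (Finset.univ.image Sum.inl) hm
    have h1 : (⋂ x ∈ (Finset.univ.image Sum.inl : Finset (Fin Ntr ⊕ Fin Nte)),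
        (Sum.elim Xtr Xte) x ⁻¹' sets x) = Btr i := by
      ext ω
      simp [hsets, hBtr]
    have h2 : (∏ x ∈ (Finset.univ.image Sum.inl : Finset (Fin Ntr ⊕ Fin Nte)),
        P ((Sum.elim Xtr Xte) x ⁻¹' sets x)) = (μ (A i)ᶜ) ^ Ntr := by
      rw [Finset.prod_image (by intro a _ b _ h; exact Sum.inl_injective h)]
      have : ∀ j : Fin Ntr, P ((Sum.elim Xtr Xte) (Sum.inl j) ⁻¹' sets (Sum.inl j))
          = μ (A i)ᶜ := by
        intro j
        simp only [Sum.elim_inl, hsets]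
        rw [← hlaw_tr j, Measure.map_apply (hmeas_tr j) (hAm i)]
      rw [Finset.prod_congr rfl (fun j _ => this j)]
      simp
    rw [← h1, key, h2]
  have hPBte : ∀ i, P (Bte i) = (μ (A i)ᶜ) ^ Nte := by
    intro i
    set sets : (Fin Ntr ⊕ Fin Nte) → Set {c : Fin n → Fin L // Function.Injective c} := Sum.elim (fun _ => Set.univ) (fun _ => (A i)ᶜ)
      with hsets
    have hm : ∀ x ∈ (Finset.univ.image Sum.inr : Finset (Fin Ntr ⊕ Fin Nte)),
        MeasurableSet (sets x) := by
      rintro (j | j) _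
      · exact MeasurableSet.univ
      · exact hAm i
    have key := hindep.measure_inter_preimage_eq_mul (Finset.univ.image Sum.inr) hm
    have h1 : (⋂ x ∈ (Finset.univ.image Sum.inr : Finset (Fin Ntr ⊕ Fin Nte)),
        (Sum.elim Xtr Xte) x ⁻¹' sets x) = Bte i := by
      ext ω
      simp [hsets, hBte]
    have h2 : (∏ x ∈ (Finset.univ.image Sum.inr : Finset (Fin Ntr ⊕ Fin Nte)),
        P ((Sum.elim Xtr Xte) x ⁻¹' sets x)) = (μ (A i)ᶜ) ^ Nte := by
      rw [Finset.prod_image (by intro a _ b _ h; exact Sum.inr_injective h)]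
      have : ∀ j : Fin Nte, P ((Sum.elim Xtr Xte) (Sum.inr j) ⁻¹' sets (Sum.inr j))
          = μ (A i)ᶜ := by
        intro j
        simp only [Sum.elim_inr, hsets]
        rw [← hlaw_te j, Measure.map_apply (hmeas_te j) (hAm i)]
      rw [Finset.prod_congr rfl (fun j _ => this j)]
      simp
    rw [← h1, key, h2]
  -- real bounds on miss probabilities
  have hPBtrR : ∀ i, (P (Btr i)).toReal ≤ (1 - q) ^ Ntr := by
    intro i
    rw [hPBtr i, ENNReal.toReal_pow]
    exact pow_le_pow_left₀ ENNReal.toReal_nonneg (hμA i) Ntr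
  have hPBteR : ∀ i, (P (Bte i)).toReal ≤ (1 - q) ^ Nte := by
    intro i
    rw [hPBte i, ENNReal.toReal_pow]
    exact pow_le_pow_left₀ ENNReal.toReal_nonneg (hμA i) Nte
  -- the main event
  set E : Set Ω := {ω | Ztr ω + Zte ω ≤ L} with hE
  have hEm : MeasurableSet E := by
    have hZtrm : Measurable Ztr := by
      have : Ztr = (fun v : Fin Ntr → {c : Fin n → Fin L // Function.Injective c} =>
          ({i : Fin L | ∃ j k, (v j : Fin n → Fin L) k = i}).ncard) ∘
          (fun ω j => Xtr j ω) := by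
        funext ω; simp [hZtr, hItr]
      rw [this]
      exact (measurable_of_finite _).comp (measurable_pi_lambda _ hmeas_tr)
    have hZtem : Measurable Zte := by
      have : Zte = (fun v : Fin Nte → {c : Fin n → Fin L // Function.Injective c} =>
          ({i : Fin L | ∃ j k, (v j : Fin n → Fin L) k = i}).ncard) ∘
          (fun ω j => Xte j ω) := by
        funext ω; simp [hZte, hIte]
      rw [this]
      exact (measurable_of_finite _).comp (measurable_pi_lambda _ hmeas_te)
    exact (hZtrm.add hZtem) (Set.to_countable (Set.Iic L)).measurableSet
  constructor
  · -- first inequality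
    apply ENNReal.toReal_mono (measure_ne_top P _)
    apply measure_mono
    intro ω hω
    have hω' : Itr ω ∩ Ite ω = ∅ := hω
    simp only [hE, Set.mem_setOf_eq]
    rw [hZtr, hZte]
    have hfin : (Itr ω).Finite := Set.toFinite _
    have hdisj : Disjoint (Itr ω) (Ite ω) := Set.disjoint_iff_inter_eq_empty.mpr hω'
    calc (Itr ω).ncard + (Ite ω).ncard = (Itr ω ∪ Ite ω).ncard :=
          (Set.ncard_union_eq hdisj (Set.toFinite _) (Set.toFinite _)).symm
      _ ≤ (Set.univ : Set (Fin L)).ncard :=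
          Set.ncard_le_ncard (Set.subset_univ _) (Set.toFinite _)
      _ = L := by rw [Set.ncard_univ]; simp
  · -- second inequality: Markov-type bound
    -- pointwise bound
    have hpt : ∀ ω, E.indicator (fun _ => (L : ℝ≥0∞)) ω ≤
        ∑ i : Fin L, ((Btr i).indicator 1 ω + (Bte i).indicator 1 ω) := by
      intro ω
      by_cases hω : ω ∈ E
      · rw [Set.indicator_of_mem hω]
        have hsum_tr : ∑ i : Fin L, (Btr i).indicator (1 : Ω → ℝ≥0∞) ω
            = ((Finset.univ.filter (fun i => i ∉ Itr ω)).card : ℝ≥0∞) := by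
          rw [← Finset.sum_boole]
          apply Finset.sum_congr rfl
          intro i _
          rw [← hBtr_eq i]
          by_cases h : i ∉ Itr ω <;> simp [Set.indicator_apply, h]
        have hsum_te : ∑ i : Fin L, (Bte i).indicator (1 : Ω → ℝ≥0∞) ω
            = ((Finset.univ.filter (fun i => i ∉ Ite ω)).card : ℝ≥0∞) := by
          rw [← Finset.sum_boole]
          apply Finset.sum_congr rfl
          intro i _
          rw [← hBte_eq i]
          by_cases h : i ∉ Ite ω <;> simp [Set.indicator_apply, h]
        rw [Finset.sum_add_distrib, hsum_tr, hsum_te, ← Nat.cast_add, Nat.cast_le]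
        have h1 := filter_card_aux L (Itr ω)
        have h2 := filter_card_aux L (Ite ω)
        have hωE : (Itr ω).ncard + (Ite ω).ncard ≤ L := by
          have := hω; simp only [hE, Set.mem_setOf_eq, hZtr, hZte] at this; exact this
        omega
      · rw [Set.indicator_of_notMem hω]; exact zero_le
    -- integrate
    have hint : (L : ℝ≥0∞) * P E ≤ ∑ i : Fin L, (P (Btr i) + P (Bte i)) := by
      have lhs : (L : ℝ≥0∞) * P E = ∫⁻ ω, E.indicator (fun _ => (L : ℝ≥0∞)) ω ∂P := by
        rw [lintegral_indicator_const hEm]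
      have rhs : (∑ i : Fin L, (P (Btr i) + P (Bte i))) =
          ∫⁻ ω, ∑ i : Fin L, ((Btr i).indicator 1 ω + (Bte i).indicator 1 ω) ∂P := by
        rw [lintegral_finset_sum]
        · apply Finset.sum_congr rfl
          intro i _
          rw [lintegral_add_left (measurable_one.indicator (hBtrm i))]
          rw [lintegral_indicator_one (hBtrm i), lintegral_indicator_one (hBtem i)]
        · intro i _
          exact (measurable_one.indicator (hBtrm i)).add (measurable_one.indicator (hBtem i))
      rw [lhs, rhs]
      exact lintegral_mono hpt
    -- convert to real
    have hfin : (∑ i : Fin L, (P (Btr i) + P (Bte i))) ≠ ⊤ := by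
      apply ENNReal.sum_ne_top.mpr
      intro i _
      exact ENNReal.add_ne_top.mpr ⟨measure_ne_top _ _, measure_ne_top _ _⟩
    have hreal : (L : ℝ) * (P E).toReal ≤ L * ((1 - q) ^ Ntr + (1 - q) ^ Nte) := by
      have h1 := ENNReal.toReal_mono hfin hint
      rw [ENNReal.toReal_mul, ENNReal.toReal_natCast] at h1
      refine h1.trans ?_
      rw [ENNReal.toReal_sum (fun i _ => ENNReal.add_ne_top.mpr
        ⟨measure_ne_top _ _, measure_ne_top _ _⟩)]
      calc ∑ i : Fin L, (P (Btr i) + P (Bte i)).toReal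
          ≤ ∑ i : Fin L, ((1 - q) ^ Ntr + (1 - q) ^ Nte) := by
            apply Finset.sum_le_sum
            intro i _
            rw [ENNReal.toReal_add (measure_ne_top _ _) (measure_ne_top _ _)]
            exact add_le_add (hPBtrR i) (hPBteR i)
        _ = L * ((1 - q) ^ Ntr + (1 - q) ^ Nte) := by
            rw [Finset.sum_const, Finset.card_univ, Fintype.card_fin, nsmul_eq_mul]
    have hPE : (P E).toReal ≤ (1 - q) ^ Ntr + (1 - q) ^ Nte :=
      le_of_mul_le_mul_left (by linarith [hreal]) (by exact_mod_cast hL : (0:ℝ) < L)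
    have h1q0 : (0:ℝ) ≤ 1 - q := by linarith
    have h1q1 : (1:ℝ) - q ≤ 1 := by linarith
    have hmono : ∀ N, min Ntr Nte ≤ N → (1 - q) ^ N ≤ (1 - q) ^ min Ntr Nte :=
      fun N hN => pow_le_pow_of_le_one h1q0 h1q1 hN
    have hfinal : (1 - q) ^ Ntr + (1 - q) ^ Nte ≤ 4 * (1 - q) ^ min Ntr Nte := by
      have ha := hmono Ntr (min_le_left _ _)
      have hb := hmono Nte (min_le_right _ _)
      have hc : (0:ℝ) ≤ (1 - q) ^ min Ntr Nte := pow_nonneg h1q0 _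
      linarith
    exact hPE.trans hfinal
end

section
/- Suppose each class appearance probability satisfies p_i ≥ γn/L for some γ ∈ (0,1], and let ρ ∈ (0,4]. Draw N_tr train tuples and N_te test tuples, all mutually independent, each with law μ, and let I_tr and I_te be the sets of classes observed among the train and test tuples respectively. If min(N_tr, N_te) ≥ ln(4/ρ)·L/(γn), then the probability that the observed train and test class sets are disjoint satisfies P(I_tr ∩ I_te = ∅) ≤ ρ. -/
open MeasureTheory ProbabilityTheory

lemma helper_prod_le (N : ℕ) (c ρ : ℝ) (hρ : 0 < ρ)
    (hN : Real.log (4 / ρ) ≤ N * c) (t : Fin N → ℝ)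
    (ht0 : ∀ j, 0 ≤ t j) (ht : ∀ j, t j ≤ 1 - c) :
    ∏ j, t j ≤ ρ / 4 := by
  have hexp : ∀ j, t j ≤ Real.exp (-c) := fun j => le_trans (ht j) (by
    have := Real.add_one_le_exp (-c); linarith)
  calc ∏ j, t j ≤ ∏ _j : Fin N, Real.exp (-c) :=
        Finset.prod_le_prod (fun j _ => ht0 j) (fun j _ => hexp j)
    _ = Real.exp (-c) ^ N := by simp
    _ = Real.exp (N * (-c)) := (Real.exp_nat_mul _ N).symm
    _ ≤ Real.exp (-Real.log (4 / ρ)) := by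
        apply Real.exp_le_exp.mpr; nlinarith
    _ = ρ / 4 := by
        rw [Real.exp_neg, Real.exp_log (by positivity)]
        field_simp

/-- Suppose each class appearance probability satisfies `p_i ≥ γn/L` for
some `γ ∈ (0,1]`, and let `ρ ∈ (0,4]`. Draw `N_tr` train and `N_te` test tuples, all
mutually independent, each with law `μ`, and let `I_tr`, `I_te` be the sets of observed
classes. If `min(N_tr, N_te) ≥ ln(4/ρ)·L/(γn)`, then `P(I_tr ∩ I_te = ∅) ≤ ρ`. -/
theorem prob_disjoint_train_test_classes_le_rho
    (L n Ntr Nte : ℕ) (hL : 1 ≤ L) (hn : 1 ≤ n) (hnL : n ≤ L)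
    (hNtr : 1 ≤ Ntr) (hNte : 1 ≤ Nte)
    (γ : ℝ) (hγ : γ ∈ Set.Ioc (0 : ℝ) 1)
    (ρ : ℝ) (hρ : ρ ∈ Set.Ioc (0 : ℝ) 4)
    (μ : Measure {c : Fin n → Fin L // Function.Injective c}) [IsProbabilityMeasure μ]
    (hp : ∀ i : Fin L,
      γ * n / L ≤ (μ {c | ∃ k, (c : Fin n → Fin L) k = i}).toReal)
    {Ω : Type*} [MeasurableSpace Ω] (P : Measure Ω) [IsProbabilityMeasure P]
    (Xtr : Fin Ntr → Ω → {c : Fin n → Fin L // Function.Injective c})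
    (Xte : Fin Nte → Ω → {c : Fin n → Fin L // Function.Injective c})
    (hmeas_tr : ∀ j, Measurable (Xtr j)) (hmeas_te : ∀ j, Measurable (Xte j))
    (hlaw_tr : ∀ j, Measure.map (Xtr j) P = μ)
    (hlaw_te : ∀ j, Measure.map (Xte j) P = μ)
    (hindep : iIndepFun (Sum.elim Xtr Xte) P)
    (Itr Ite : Ω → Set (Fin L))
    (hItr : ∀ ω, Itr ω = {i : Fin L | ∃ j : Fin Ntr, ∃ k : Fin n,
      (Xtr j ω : Fin n → Fin L) k = i})
    (hIte : ∀ ω, Ite ω = {i : Fin L | ∃ j : Fin Nte, ∃ k : Fin n,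
      (Xte j ω : Fin n → Fin L) k = i})
    (hmin : Real.log (4 / ρ) * L / (γ * n) ≤ (min Ntr Nte : ℕ)) :
    (P {ω | Itr ω ∩ Ite ω = ∅}).toReal ≤ ρ := by
  obtain ⟨hρ0, hρ4⟩ := hρ
  obtain ⟨hγ0, hγ1⟩ := hγ
  have hn0 : (0:ℝ) < n := by exact_mod_cast hn
  have hL0 : (0:ℝ) < L := by exact_mod_cast hL
  set c : ℝ := γ * n / L with hc
  have hc0 : 0 < c := by positivity
  set i0 : Fin L := ⟨0, hL⟩ with hi0
  set A : Set {c : Fin n → Fin L // Function.Injective c} :=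
    {c | ∃ k, (c : Fin n → Fin L) k = i0} with hAdef
  have hA : MeasurableSet A := by
    have hA' : A = ⋃ k : Fin n, (fun c : {c : Fin n → Fin L // Function.Injective c} =>
        (c : Fin n → Fin L) k) ⁻¹' {i0} := by
      ext c; simp [hAdef]
    rw [hA']
    exact MeasurableSet.iUnion fun k =>
      ((measurable_pi_apply k).comp measurable_subtype_coe) (MeasurableSet.singleton i0)
  have hμA_le : μ A ≤ 1 := prob_le_one
  have hcA : c ≤ (μ A).toReal := hp i0
  have hcomplR_le : (μ Aᶜ).toReal ≤ 1 - c := by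
    rw [prob_compl_eq_one_sub hA,
      ENNReal.toReal_sub_of_le hμA_le ENNReal.one_ne_top, ENNReal.toReal_one]
    linarith
  -- number bounds
  have hNb : ∀ N : ℕ, ((min Ntr Nte : ℕ) : ℝ) ≤ (N : ℝ) →
      Real.log (4 / ρ) ≤ N * c := by
    intro N hN
    have hmin' : Real.log (4 / ρ) * L / (γ * n) ≤ (N : ℝ) := le_trans hmin hN
    rw [div_le_iff₀ (by positivity)] at hmin'
    rw [hc]
    rw [show (N : ℝ) * (γ * n / L) = (N : ℝ) * (γ * n) / L by ring]
    rw [le_div_iff₀ hL0]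
    linarith
  have hNtr_c : Real.log (4 / ρ) ≤ Ntr * c :=
    hNb Ntr (by exact_mod_cast min_le_left Ntr Nte)
  have hNte_c : Real.log (4 / ρ) ≤ Nte * c :=
    hNb Nte (by exact_mod_cast min_le_right Ntr Nte)
  -- train side
  have keytr := hindep.meas_biInter
      (S := Finset.univ.map ⟨Sum.inl, Sum.inl_injective⟩)
      (s := fun i => Sum.elim Xtr Xte i ⁻¹' Aᶜ)
      (fun i _ => ⟨Aᶜ, hA.compl, rfl⟩)
  have hsettr : (⋂ i ∈ Finset.univ.map ⟨Sum.inl, Sum.inl_injective⟩,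
      Sum.elim Xtr Xte i ⁻¹' Aᶜ) = ⋂ j, Xtr j ⁻¹' Aᶜ := by
    ext ω; simp
  have hPtr : ∀ j, P (Xtr j ⁻¹' Aᶜ) = μ Aᶜ := fun j => by
    rw [← hlaw_tr j, Measure.map_apply (hmeas_tr j) hA.compl]
  have htr : (P (⋂ j, Xtr j ⁻¹' Aᶜ)).toReal ≤ ρ / 4 := by
    have heq : P (⋂ j, Xtr j ⁻¹' Aᶜ) = ∏ _j : Fin Ntr, μ Aᶜ := by
      rw [← hsettr, keytr, Finset.prod_map]
      exact Finset.prod_congr rfl fun j _ => hPtr j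
    rw [heq, ENNReal.toReal_prod]
    exact helper_prod_le Ntr c ρ hρ0 hNtr_c _ (fun _ => ENNReal.toReal_nonneg)
      (fun _ => hcomplR_le)
  -- test side
  have keyte := hindep.meas_biInter
      (S := Finset.univ.map ⟨Sum.inr, Sum.inr_injective⟩)
      (s := fun i => Sum.elim Xtr Xte i ⁻¹' Aᶜ)
      (fun i _ => ⟨Aᶜ, hA.compl, rfl⟩)
  have hsette : (⋂ i ∈ Finset.univ.map ⟨Sum.inr, Sum.inr_injective⟩,
      Sum.elim Xtr Xte i ⁻¹' Aᶜ) = ⋂ j, Xte j ⁻¹' Aᶜ := by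
    ext ω; simp
  have hPte : ∀ j, P (Xte j ⁻¹' Aᶜ) = μ Aᶜ := fun j => by
    rw [← hlaw_te j, Measure.map_apply (hmeas_te j) hA.compl]
  have hte : (P (⋂ j, Xte j ⁻¹' Aᶜ)).toReal ≤ ρ / 4 := by
    have heq : P (⋂ j, Xte j ⁻¹' Aᶜ) = ∏ _j : Fin Nte, μ Aᶜ := by
      rw [← hsette, keyte, Finset.prod_map]
      exact Finset.prod_congr rfl fun j _ => hPte j
    rw [heq, ENNReal.toReal_prod]
    exact helper_prod_le Nte c ρ hρ0 hNte_c _ (fun _ => ENNReal.toReal_nonneg)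
      (fun _ => hcomplR_le)
  -- inclusion
  have hsub : {ω | Itr ω ∩ Ite ω = ∅} ⊆
      (⋂ j, Xtr j ⁻¹' Aᶜ) ∪ (⋂ j, Xte j ⁻¹' Aᶜ) := by
    intro ω hω
    by_cases h : ∃ j : Fin Ntr, Xtr j ω ∈ A
    · right
      apply Set.mem_iInter.mpr
      intro j hmem
      obtain ⟨j', hj'⟩ := h
      have h1 : i0 ∈ Itr ω := by rw [hItr]; exact ⟨j', hj'⟩
      have h2 : i0 ∈ Ite ω := by rw [hIte]; exact ⟨j, hmem⟩
      exact Set.eq_empty_iff_forall_notMem.mp hω i0 ⟨h1, h2⟩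
    · left
      exact Set.mem_iInter.mpr fun j hmem => h ⟨j, hmem⟩
  calc (P {ω | Itr ω ∩ Ite ω = ∅}).toReal
      ≤ (P ((⋂ j, Xtr j ⁻¹' Aᶜ) ∪ ⋂ j, Xte j ⁻¹' Aᶜ)).toReal :=
        ENNReal.toReal_mono (measure_ne_top P _) (measure_mono hsub)
    _ ≤ (P (⋂ j, Xtr j ⁻¹' Aᶜ) + P (⋂ j, Xte j ⁻¹' Aᶜ)).toReal :=
        ENNReal.toReal_mono
          (ENNReal.add_ne_top.mpr ⟨measure_ne_top P _, measure_ne_top P _⟩)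
          (measure_union_le _ _)
    _ = (P (⋂ j, Xtr j ⁻¹' Aᶜ)).toReal + (P (⋂ j, Xte j ⁻¹' Aᶜ)).toReal :=
        ENNReal.toReal_add (measure_ne_top P _) (measure_ne_top P _)
    _ ≤ ρ / 4 + ρ / 4 := add_le_add htr hte
    _ ≤ ρ := by linarith
end

section
/- Let n, N ≥ 1 be integers, γ ∈ (0,1] real, and L a real number with L ≥ nN. Then L·(1 − (1 − γn/L)^N) ≥ γnN/(1 + γ). -/
/-- For integers `n, N ≥ 1`, real `γ ∈ (0,1]`, and real `L ≥ nN`,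
`L·(1 − (1 − γn/L)^N) ≥ γnN/(1 + γ)`. -/
theorem lower_bound_large_class_regime
    (n N : ℕ) (hn : 1 ≤ n) (hN : 1 ≤ N)
    (γ : ℝ) (hγ : γ ∈ Set.Ioc (0 : ℝ) 1)
    (L : ℝ) (hL : ((n : ℝ) * N) ≤ L) :
    γ * n * N / (1 + γ) ≤ L * (1 - (1 - γ * n / L) ^ N) := by
  obtain ⟨hγ0, hγ1⟩ := hγ
  have hn1 : (1 : ℝ) ≤ n := by exact_mod_cast hn
  have hN1 : (1 : ℝ) ≤ N := by exact_mod_cast hN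
  have hnN : (1 : ℝ) ≤ (n : ℝ) * N := by nlinarith
  have hL0 : (0 : ℝ) < L := lt_of_lt_of_le (by linarith) hL
  set x : ℝ := γ * n / L with hxdef
  have hx0 : 0 ≤ x := by positivity
  have hLx : L * x = γ * n := by
    rw [hxdef]
    field_simp [hL0.ne']
  have hNx : (N : ℝ) * x ≤ γ := by
    rw [hxdef, mul_div_assoc']
    rw [div_le_iff₀ hL0]
    nlinarith
  have hx1 : x ≤ 1 := by nlinarith
  -- Bernoulli: (1+x)^N ≥ 1 + N*x
  have hbern : 1 + (N : ℝ) * x ≤ (1 + x) ^ N := by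
    have := one_add_mul_le_pow (a := x) (by linarith) N
    linarith
  have hsq : ((1 - x) * (1 + x)) ^ N ≤ 1 := by
    apply pow_le_one₀ <;> nlinarith
  have hkey : (1 - x) ^ N * (1 + (N : ℝ) * x) ≤ 1 := by
    have h1 : (1 - x) ^ N * (1 + (N : ℝ) * x) ≤ (1 - x) ^ N * (1 + x) ^ N := by
      apply mul_le_mul_of_nonneg_left hbern (pow_nonneg (by linarith) N)
    calc (1 - x) ^ N * (1 + (N : ℝ) * x) ≤ (1 - x) ^ N * (1 + x) ^ N := h1
      _ = ((1 - x) * (1 + x)) ^ N := (mul_pow _ _ _).symm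
      _ ≤ 1 := hsq
  have hNx0 : 0 < 1 + (N : ℝ) * x := by positivity
  -- (1-x)^N ≤ 1 - N*x/(1+γ)
  have hmain : (1 - x) ^ N ≤ 1 - (N : ℝ) * x / (1 + γ) := by
    have h2 : (1 : ℝ) ≤ (1 - (N : ℝ) * x / (1 + γ)) * (1 + (N : ℝ) * x) := by
      have hγ0' : (0 : ℝ) < 1 + γ := by linarith
      rw [ge_iff_le.symm]
      have expand : (1 - (N : ℝ) * x / (1 + γ)) * (1 + (N : ℝ) * x)
          = 1 + ((N : ℝ) * x) * (γ - (N : ℝ) * x) / (1 + γ) := by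
        field_simp
        ring
      rw [expand]
      have : 0 ≤ ((N : ℝ) * x) * (γ - (N : ℝ) * x) / (1 + γ) := by
        apply div_nonneg _ (le_of_lt hγ0')
        apply mul_nonneg (by positivity)
        linarith
      linarith
    nlinarith [hkey, h2, hNx0]
  have hfinal : (N : ℝ) * x / (1 + γ) ≤ 1 - (1 - x) ^ N := by linarith
  have : L * ((N : ℝ) * x / (1 + γ)) ≤ L * (1 - (1 - x) ^ N) :=
    mul_le_mul_of_nonneg_left hfinal (le_of_lt hL0)
  calc γ * n * N / (1 + γ) = L * ((N : ℝ) * x / (1 + γ)) := by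
        rw [show L * ((N : ℝ) * x / (1 + γ)) = (N : ℝ) * (L * x) / (1 + γ) by ring, hLx]
        ring
      _ ≤ L * (1 - (1 - x) ^ N) := this
end

section
/- Suppose each class appearance probability satisfies p_i ≥ γn/L for some γ ∈ (0,1], and suppose L ≥ nN. If N tuples are drawn i.i.d. from μ and Z denotes the number of distinct classes of {1,…,L} appearing in at least one of the N drawn tuples, then E[Z] ≥ γnN/(1 + γ). -/
open MeasureTheory ProbabilityTheory

lemma pow_le_one_div_aux (x : ℝ) (N : ℕ) (hx0 : 0 ≤ x) (hx1 : x ≤ 1) :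
    (1 - x)^N ≤ 1 / (1 + N * x) := by
  have hpos : (0:ℝ) < 1 + N * x := by positivity
  rw [le_div_iff₀ hpos]
  calc (1-x)^N * (1 + N*x) ≤ (1-x)^N * (1+x)^N := by
        apply mul_le_mul_of_nonneg_left _ (pow_nonneg (by linarith) N)
        exact one_add_mul_le_pow (by linarith) N
    _ = (1 - x^2)^N := by rw [← mul_pow]; ring_nf
    _ ≤ 1 := pow_le_one₀ (by nlinarith) (by nlinarith)


/-- Suppose each class appearance probability satisfies `p_i ≥ γn/L` for
some `γ ∈ (0,1]`, and suppose `L ≥ nN`. If `N` tuples are drawn i.i.d. from `μ` and `Z` is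
the number of distinct classes observed among the drawn tuples, then
`E[Z] ≥ γnN/(1 + γ)`. -/
theorem expected_observed_classes_lower_bound_large_regime
    (L n N : ℕ) (hL : 1 ≤ L) (hn : 1 ≤ n) (hnL : n ≤ L) (hN : 1 ≤ N)
    (hLnN : n * N ≤ L)
    (γ : ℝ) (hγ : γ ∈ Set.Ioc (0 : ℝ) 1)
    (μ : Measure {c : Fin n → Fin L // Function.Injective c}) [IsProbabilityMeasure μ]
    (hp : ∀ i : Fin L,
      γ * n / L ≤ (μ {c | ∃ k, (c : Fin n → Fin L) k = i}).toReal)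
    {Ω : Type*} [MeasurableSpace Ω] (P : Measure Ω) [IsProbabilityMeasure P]
    (X : Fin N → Ω → {c : Fin n → Fin L // Function.Injective c})
    (hmeas : ∀ j, Measurable (X j))
    (hlaw : ∀ j, Measure.map (X j) P = μ)
    (hindep : iIndepFun X P)
    (Z : Ω → ℕ)
    (hZ : ∀ ω, Z ω = Set.ncard {i : Fin L | ∃ j : Fin N, ∃ k : Fin n,
      (X j ω : Fin n → Fin L) k = i}) :
    γ * n * N / (1 + γ) ≤ ∫ ω, (Z ω : ℝ) ∂P := by
  obtain ⟨hγ0, hγ1⟩ := hγ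
  -- target sets in the tuple space
  set S : Fin L → Set {c : Fin n → Fin L // Function.Injective c} :=
    fun i => {c | ∃ k, (c : Fin n → Fin L) k = i} with hS
  have hSmeas : ∀ i, MeasurableSet (S i) := fun i => (S i).to_countable.measurableSet
  -- events in Ω
  set A : Fin L → Set Ω := fun i => {ω | ∃ j : Fin N, X j ω ∈ S i} with hA
  have hAeq : ∀ i, A i = ⋃ j, (X j) ⁻¹' (S i) := by
    intro i; ext ω; simp [hA, Set.mem_iUnion]
  have hAmeas : ∀ i, MeasurableSet (A i) := by
    intro i; rw [hAeq]; exact MeasurableSet.iUnion fun j => (hmeas j) (hSmeas i)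
  -- q i : probability class i appears in one draw
  set q : Fin L → ℝ := fun i => (μ (S i)).toReal with hq
  have hq1 : ∀ i, q i ≤ 1 := fun i => by
    simpa using ENNReal.toReal_mono (measure_ne_top μ Set.univ)
      (measure_mono (Set.subset_univ (S i)))
  have hq0 : ∀ i, γ * n / L ≤ q i := hp
  have hx0 : 0 ≤ γ * n / L := by positivity
  -- probability of A i
  have hPA : ∀ i, (P (A i)).toReal = 1 - (1 - q i)^N := by
    intro i
    have hcompl : (A i)ᶜ = ⋂ j, (X j) ⁻¹' (S i)ᶜ := by
      rw [hAeq]; simp [Set.compl_iUnion]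
    have hmeasAc : P ((A i)ᶜ) = ∏ j : Fin N, P ((X j) ⁻¹' (S i)ᶜ) := by
      rw [hcompl]
      exact hindep.meas_iInter fun j => ⟨(S i)ᶜ, (hSmeas i).compl, rfl⟩
    have hPj : ∀ j, P ((X j) ⁻¹' (S i)ᶜ) = μ ((S i)ᶜ) := by
      intro j
      rw [← hlaw j, Measure.map_apply (hmeas j) (hSmeas i).compl]
    have hmuc : (μ ((S i)ᶜ)).toReal = 1 - q i := by
      rw [measure_compl (hSmeas i) (measure_ne_top μ _), measure_univ,
        ENNReal.toReal_sub_of_le prob_le_one (by simp)]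
      simp [hq]
    have hcval : (P ((A i)ᶜ)).toReal = (1 - q i)^N := by
      rw [hmeasAc, ENNReal.toReal_prod]
      simp only [hPj, hmuc, Finset.prod_const, Finset.card_univ, Fintype.card_fin]
    have h1 : (P ((A i)ᶜ)).toReal = 1 - (P (A i)).toReal := by
      rw [measure_compl (hAmeas i) (measure_ne_top P (A i)), measure_univ,
        ENNReal.toReal_sub_of_le prob_le_one (by simp)]
      simp
    linarith
  -- Z as a sum of indicators
  have hZsum : ∀ ω, (Z ω : ℝ) = ∑ i : Fin L, (A i).indicator (fun _ => (1:ℝ)) ω := by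
    intro ω
    rw [hZ ω]
    have : {i : Fin L | ∃ j : Fin N, ∃ k : Fin n, (X j ω : Fin n → Fin L) k = i}
        = {i : Fin L | ω ∈ A i} := by
      ext i; simp [hA, hS]
    rw [this, Set.ncard_eq_toFinset_card', Set.toFinset_setOf]
    simp only [Set.indicator_apply]
    rw [Finset.sum_boole]
  -- compute the integral
  have hint : ∫ ω, (Z ω : ℝ) ∂P = ∑ i : Fin L, (P (A i)).toReal := by
    calc ∫ ω, (Z ω : ℝ) ∂P
        = ∫ ω, ∑ i : Fin L, (A i).indicator (fun _ => (1:ℝ)) ω ∂P :=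
          integral_congr_ae (Filter.Eventually.of_forall hZsum)
      _ = ∑ i : Fin L, ∫ ω, (A i).indicator (fun _ => (1:ℝ)) ω ∂P :=
          integral_finset_sum _ fun i _ =>
            (integrable_const (1:ℝ)).indicator (hAmeas i)
      _ = ∑ i : Fin L, (P (A i)).toReal := by
          refine Finset.sum_congr rfl fun i _ => ?_
          rw [integral_indicator_const _ (hAmeas i)]
          simp
          rfl
  rw [hint]
  -- lower bound each term
  set x : ℝ := γ * n / L with hxdef
  have hL0 : (0:ℝ) < L := by exact_mod_cast hL
  have hx1 : x ≤ 1 := by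
    rw [hxdef, div_le_one hL0]
    have : (n:ℝ) ≤ L := by exact_mod_cast hnL
    nlinarith
  have hterm : ∀ i, 1 - (1 - x)^N ≤ (P (A i)).toReal := by
    intro i
    rw [hPA i]
    have : (1 - q i)^N ≤ (1 - x)^N := by
      apply pow_le_pow_left₀ (by linarith [hq1 i]) (by linarith [hq0 i])
    linarith
  have hsum : (L:ℝ) * (1 - (1 - x)^N) ≤ ∑ i : Fin L, (P (A i)).toReal := by
    calc (L:ℝ) * (1 - (1 - x)^N) = ∑ _i : Fin L, (1 - (1 - x)^N) := by
          simp [mul_comm]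
          ring
      _ ≤ _ := Finset.sum_le_sum fun i _ => hterm i
  refine le_trans ?_ hsum
  -- final analytic estimate
  have hineq := pow_le_one_div_aux x N hx0 hx1
  have hNx : (N:ℝ) * x = γ * n * N / L := by rw [hxdef]; ring
  have hpos : (0:ℝ) < 1 + N * x := by positivity
  have hγnN : γ * n * N / L ≤ γ := by
    rw [div_le_iff₀ hL0]
    have h1 : (n:ℝ) * N ≤ L := by exact_mod_cast hLnN
    nlinarith
  have step1 : (L:ℝ) * (N * x) / (1 + N * x) ≤ (L:ℝ) * (1 - (1 - x)^N) := by
    rw [div_le_iff₀ hpos]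
    have h2 : (1 - (1-x)^N) * (1 + N*x) ≥ N * x := by
      have : (1-x)^N * (1 + N*x) ≤ 1 := by
        rw [← le_div_iff₀ hpos]; exact hineq
      nlinarith
    nlinarith
  refine le_trans ?_ step1
  -- γnN/(1+γ) ≤ L * (Nx)/(1+Nx) where L*Nx = γnN
  have hLNx : (L:ℝ) * (N * x) = γ * n * N := by
    rw [hxdef]; field_simp
  rw [hLNx]
  gcongr
  rw [hNx]; linarith
end

section
/- Suppose each class appearance probability satisfies p_i ≥ γn/L for some γ ∈ (0,1], and suppose L ≥ nN. If N tuples are drawn i.i.d. from μ and Z denotes the number of distinct classes of {1,…,L} appearing in at least one of the N drawn tuples, then for every η ∈ (0,1), P(Z ≤ η·γnN/(1 + γ)) ≤ (1 + γ)² / (2·(1 − η)²·γ²·N). -/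
open MeasureTheory ProbabilityTheory

namespace FinProbAux

open Finset

variable {α : Type*} [Fintype α]

/-- Expectation with respect to a weight function. -/
def ex (w f : α → ℝ) : ℝ := ∑ a, w a * f a

/-- Variance with respect to a weight function. -/
def vr (w f : α → ℝ) : ℝ := ex w (fun a => (f a - ex w f) ^ 2)

lemma ex_sub_self (w f : α → ℝ) (hw1 : ∑ a, w a = 1) :
    ∑ a, w a * (f a - ex w f) = 0 := by
  simp only [mul_sub, Finset.sum_sub_distrib, ← Finset.sum_mul, hw1, one_mul]
  simp [ex]

lemma vr_nonneg (w f : α → ℝ) (hw : ∀ a, 0 ≤ w a) : 0 ≤ vr w f :=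
  Finset.sum_nonneg fun a _ => mul_nonneg (hw a) (sq_nonneg _)

lemma ex_le_of_le (w f : α → ℝ) (hw : ∀ a, 0 ≤ w a) (hw1 : ∑ a, w a = 1)
    (C : ℝ) (hC : ∀ a, f a ≤ C) : ex w f ≤ C := by
  calc ex w f ≤ ∑ a, w a * C :=
        Finset.sum_le_sum fun a _ => mul_le_mul_of_nonneg_left (hC a) (hw a)
    _ = C := by rw [← Finset.sum_mul, hw1, one_mul]

lemma vr_eq_pair (w f : α → ℝ) (hw1 : ∑ a, w a = 1) :
    vr w f = (1 / 2) * ∑ a, ∑ b, w a * w b * (f a - f b) ^ 2 := by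
  set m := ex w f with hm
  set V := ∑ b : α, w b * (f b - m) ^ 2 with hV
  have h0 : ∑ b : α, w b * (f b - m) = 0 := ex_sub_self w f hw1
  have hb : ∀ a : α, ∑ b : α, w a * w b * (f a - f b) ^ 2
      = (w a * (f a - m) ^ 2) * (∑ b : α, w b) + w a * V
        - 2 * (w a * (f a - m)) * (∑ b : α, w b * (f b - m)) := by
    intro a
    rw [Finset.mul_sum, Finset.mul_sum, Finset.mul_sum, ← Finset.sum_add_distrib,
      ← Finset.sum_sub_distrib]
    refine Finset.sum_congr rfl fun b _ => by
      show _ = w a * (f a - m) ^ 2 * w b + w a * (w b * (f b - m) ^ 2)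
        - 2 * (w a * (f a - m)) * (w b * (f b - m))
      ring
  have hsum : ∑ a : α, ∑ b : α, w a * w b * (f a - f b) ^ 2 = 2 * V := by
    simp only [hb, hw1, h0, mul_one, mul_zero, sub_zero]
    rw [Finset.sum_add_distrib, ← hV, ← Finset.sum_mul, hw1, one_mul]
    ring
  have : vr w f = V := rfl
  rw [this, hsum]; ring

lemma vr_le_of_bdd (w f : α → ℝ) (hw : ∀ a, 0 ≤ w a) (hw1 : ∑ a, w a = 1)
    (K : ℝ) (hK : ∀ a b, |f a - f b| ≤ K) : vr w f ≤ K ^ 2 / 2 := by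
  rw [vr_eq_pair w f hw1]
  have h1 : ∑ a : α, ∑ b : α, w a * w b * (f a - f b) ^ 2
      ≤ ∑ a : α, ∑ b : α, w a * w b * K ^ 2 := by
    refine Finset.sum_le_sum fun a _ => Finset.sum_le_sum fun b _ => ?_
    refine mul_le_mul_of_nonneg_left ?_ (mul_nonneg (hw a) (hw b))
    calc (f a - f b) ^ 2 = |f a - f b| ^ 2 := (sq_abs _).symm
      _ ≤ K ^ 2 := pow_le_pow_left₀ (abs_nonneg _) (hK a b) 2
  have h2 : ∑ a : α, ∑ b : α, w a * w b * K ^ 2 = K ^ 2 := by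
    simp only [← Finset.sum_mul, ← Finset.mul_sum]
    simp [hw1]
  nlinarith [h1, h2]

/-- A Chebyshev-type lower-tail bound. -/
lemma cheb (w f : α → ℝ) (hw : ∀ a, 0 ≤ w a)
    (θ : ℝ) (hθ : θ < ex w f) :
    ∑ a ∈ univ.filter (fun a => f a ≤ θ), w a ≤ vr w f / (ex w f - θ) ^ 2 := by
  rw [le_div_iff₀ (pow_pos (sub_pos.mpr hθ) 2)]
  have h1 : (∑ a ∈ univ.filter (fun a => f a ≤ θ), w a) * (ex w f - θ) ^ 2
      = ∑ a ∈ univ.filter (fun a => f a ≤ θ), w a * (ex w f - θ) ^ 2 := by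
    rw [Finset.sum_mul]
  rw [h1]
  calc ∑ a ∈ univ.filter (fun a => f a ≤ θ), w a * (ex w f - θ) ^ 2
      ≤ ∑ a ∈ univ.filter (fun a => f a ≤ θ), w a * (f a - ex w f) ^ 2 := by
        refine Finset.sum_le_sum fun a ha => ?_
        refine mul_le_mul_of_nonneg_left ?_ (hw a)
        have hfa : f a ≤ θ := by simpa using (Finset.mem_filter.mp ha).2
        have h2 : ex w f - θ ≤ ex w f - f a := by linarith
        calc (ex w f - θ) ^ 2 ≤ (ex w f - f a) ^ 2 :=
              pow_le_pow_left₀ (by linarith) h2 2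
          _ = (f a - ex w f) ^ 2 := by ring
    _ ≤ vr w f :=
        Finset.sum_le_sum_of_subset_of_nonneg (Finset.filter_subset _ _)
          fun a _ _ => mul_nonneg (hw a) (sq_nonneg _)

lemma ex_equiv {β : Type*} [Fintype β] (e : β ≃ α) (w f : α → ℝ) :
    ex w f = ex (w ∘ e) (f ∘ e) :=
  (Fintype.sum_equiv e (fun b => (w ∘ e) b * (f ∘ e) b) (fun a => w a * f a)
    (fun _ => rfl)).symm

lemma vr_equiv {β : Type*} [Fintype β] (e : β ≃ α) (w f : α → ℝ) :
    vr w f = vr (w ∘ e) (f ∘ e) := by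
  rw [vr, vr, ex_equiv e w, ← ex_equiv e w f]
  rfl

lemma sum_prod_weights {S : Type*} [Fintype S] (w : S → ℝ) (hw1 : ∑ c, w c = 1)
    (N : ℕ) : ∑ y : Fin N → S, ∏ j, w (y j) = 1 := by
  rw [← Fintype.piFinset_univ,
    ← Finset.prod_univ_sum (fun _ : Fin N => (univ : Finset S)) (fun _ c => w c)]
  simp [hw1]

lemma vr_prod {β : Type*} [Fintype β] (wβ : β → ℝ) (wα : α → ℝ) (f : β × α → ℝ)
    (hwα1 : ∑ a, wα a = 1) :
    vr (fun p : β × α => wβ p.1 * wα p.2) f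
      = ex wβ (fun b => vr wα (fun a => f (b, a)))
        + vr wβ (fun b => ex wα (fun a => f (b, a))) := by
  set m : β → ℝ := fun b => ex wα (fun a => f (b, a)) with hm
  have hM : ex (fun p : β × α => wβ p.1 * wα p.2) f = ex wβ m := by
    rw [ex, Fintype.sum_prod_type]
    refine Finset.sum_congr rfl fun b _ => ?_
    show ∑ a : α, wβ b * wα a * f (b, a) = wβ b * ex wα fun a => f (b, a)
    rw [ex, Finset.mul_sum]
    exact Finset.sum_congr rfl fun a _ => by ring
  set M : ℝ := ex wβ m with hMdef
  have key : vr (fun p : β × α => wβ p.1 * wα p.2) f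
      = ∑ b : β, wβ b * (vr wα (fun a => f (b, a)) + (m b - M) ^ 2) := by
    rw [vr, ex, hM, Fintype.sum_prod_type]
    refine Finset.sum_congr rfl fun b _ => ?_
    have h0 : ∑ a : α, wα a * (f (b, a) - m b) = 0 := ex_sub_self wα _ hwα1
    have expand : ∀ a : α, wβ b * wα a * (f (b, a) - M) ^ 2
        = wβ b * (wα a * (f (b, a) - m b) ^ 2)
          + (2 * wβ b * (m b - M)) * (wα a * (f (b, a) - m b))
          + (wβ b * (m b - M) ^ 2) * wα a := by
      intro a; ring
    simp only [expand, Finset.sum_add_distrib, ← Finset.mul_sum, h0, mul_zero, hwα1, mul_one]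
    show wβ b * (∑ a : α, wα a * (f (b, a) - m b) ^ 2) + 0 + wβ b * (m b - M) ^ 2 = _
    rw [vr]
    have h1 : ex wα (fun a => f (b, a)) = m b := rfl
    rw [h1]
    show wβ b * ex wα (fun a => (f (b, a) - m b) ^ 2) + 0 + wβ b * (m b - M) ^ 2 = _
    ring
  rw [key]
  simp only [mul_add, Finset.sum_add_distrib]
  rfl

/-- The Efron–Stein / bounded-differences variance bound for product weights. -/
theorem efron_stein {S : Type*} [Fintype S] (w : S → ℝ) (hw : ∀ c, 0 ≤ w c)
    (hw1 : ∑ c, w c = 1) (K : ℝ) :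
    ∀ (N : ℕ) (f : (Fin N → S) → ℝ),
      (∀ (x : Fin N → S) (t : Fin N) (c : S), |f (Function.update x t c) - f x| ≤ K) →
      vr (fun x => ∏ j, w (x j)) f ≤ N * K ^ 2 / 2 := by
  intro N
  induction N with
  | zero =>
    intro f _
    have h1 : vr (fun x : Fin 0 → S => ∏ j, w (x j)) f = 0 := by
      rw [vr, ex, ex, Fintype.sum_unique, Fintype.sum_unique]
      simp
    rw [h1]; norm_num
  | succ N ih =>
    intro f hf
    have hS : Nonempty S := by
      by_contra h
      rw [not_nonempty_iff] at h
      rw [Finset.univ_eq_empty, Finset.sum_empty] at hw1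
      norm_num at hw1
    obtain ⟨c0⟩ := hS
    have hK0 : 0 ≤ K := le_trans (abs_nonneg _) (hf (fun _ => c0) 0 c0)
    set e : S × (Fin N → S) ≃ (Fin (N + 1) → S) := Fin.consEquiv (fun _ => S) with he
    have hcons : ∀ (c : S) (y : Fin N → S), e (c, y) = Fin.cons c y := fun _ _ => rfl
    have hWe : ((fun x : Fin (N+1) → S => ∏ j, w (x j)) ∘ e)
        = fun p : S × (Fin N → S) => w p.1 * ∏ j, w (p.2 j) := by
      funext p
      obtain ⟨c, y⟩ := p
      rw [Function.comp_apply, hcons, Fin.prod_univ_succ]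
      simp
    rw [vr_equiv e, hWe]
    rw [vr_prod _ _ _ (sum_prod_weights w hw1 N)]
    have hWN : ∀ y : Fin N → S, 0 ≤ ∏ j, w (y j) :=
      fun y => Finset.prod_nonneg fun j _ => hw (y j)
    have hWN1 := sum_prod_weights w hw1 N
    have term1 : ex w (fun c => vr (fun y : Fin N → S => ∏ j, w (y j))
        (fun y => (f ∘ e) (c, y))) ≤ N * K ^ 2 / 2 := by
      refine ex_le_of_le _ _ hw hw1 _ fun c => ?_
      refine ih (fun y => f (Fin.cons c y)) fun y t c' => ?_
      show |f (Fin.cons c (Function.update y t c')) - f (Fin.cons c y)| ≤ K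
      rw [Fin.cons_update]
      exact hf (Fin.cons c y) t.succ c'
    have term2 : vr w (fun c => ex (fun y : Fin N → S => ∏ j, w (y j))
        (fun y => (f ∘ e) (c, y))) ≤ K ^ 2 / 2 := by
      refine vr_le_of_bdd _ _ hw hw1 _ fun c c' => ?_
      have hdiff : ex (fun y : Fin N → S => ∏ j, w (y j)) (fun y => (f ∘ e) (c, y))
          - ex (fun y : Fin N → S => ∏ j, w (y j)) (fun y => (f ∘ e) (c', y))
          = ∑ y : Fin N → S, (∏ j, w (y j)) * (f (Fin.cons c y) - f (Fin.cons c' y)) := by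
        rw [ex, ex, ← Finset.sum_sub_distrib]
        refine Finset.sum_congr rfl fun y _ => by
          simp only [Function.comp_apply, hcons]; ring
      rw [hdiff]
      calc |∑ y : Fin N → S, (∏ j, w (y j)) * (f (Fin.cons c y) - f (Fin.cons c' y))|
          ≤ ∑ y : Fin N → S, |(∏ j, w (y j)) * (f (Fin.cons c y) - f (Fin.cons c' y))| :=
            Finset.abs_sum_le_sum_abs _ _
        _ ≤ ∑ y : Fin N → S, (∏ j, w (y j)) * K := by
            refine Finset.sum_le_sum fun y _ => ?_
            rw [abs_mul, abs_of_nonneg (hWN y)]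
            refine mul_le_mul_of_nonneg_left ?_ (hWN y)
            have h3 : f (Fin.cons c y) = f (Function.update (Fin.cons c' y) 0 c) := by
              rw [Fin.update_cons_zero]
            rw [h3]
            exact hf (Fin.cons c' y) 0 c
        _ = K := by rw [← Finset.sum_mul, hWN1, one_mul]
    refine le_trans (add_le_add term1 term2) (le_of_eq ?_)
    push_cast
    ring

end FinProbAux

set_option maxHeartbeats 1000000 in
open Finset FinProbAux in
/-- Suppose each class appearance probability satisfies `p_i ≥ γn/L` for
some `γ ∈ (0,1]`, and suppose `L ≥ nN`. If `N` tuples are drawn i.i.d. from `μ` and `Z` is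
the number of distinct classes observed among the drawn tuples, then for every
`η ∈ (0,1)`, `P(Z ≤ η·γnN/(1+γ)) ≤ (1+γ)²/(2·(1−η)²·γ²·N)`. -/
theorem prob_observe_few_classes_large_regime
    (L n N : ℕ) (hL : 1 ≤ L) (hn : 1 ≤ n) (hnL : n ≤ L) (hN : 1 ≤ N)
    (hLnN : n * N ≤ L)
    (γ : ℝ) (hγ : γ ∈ Set.Ioc (0 : ℝ) 1)
    (μ : Measure {c : Fin n → Fin L // Function.Injective c}) [IsProbabilityMeasure μ]
    (hp : ∀ i : Fin L,
      γ * n / L ≤ (μ {c | ∃ k, (c : Fin n → Fin L) k = i}).toReal)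
    {Ω : Type*} [MeasurableSpace Ω] (P : Measure Ω) [IsProbabilityMeasure P]
    (X : Fin N → Ω → {c : Fin n → Fin L // Function.Injective c})
    (hmeas : ∀ j, Measurable (X j))
    (hlaw : ∀ j, Measure.map (X j) P = μ)
    (hindep : iIndepFun X P)
    (Z : Ω → ℕ)
    (hZ : ∀ ω, Z ω = Set.ncard {i : Fin L | ∃ j : Fin N, ∃ k : Fin n,
      (X j ω : Fin n → Fin L) k = i}) :
    ∀ η : ℝ, η ∈ Set.Ioo (0 : ℝ) 1 →
      (P {ω | (Z ω : ℝ) ≤ η * (γ * n * N / (1 + γ))}).toReal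
        ≤ (1 + γ) ^ 2 / (2 * (1 - η) ^ 2 * γ ^ 2 * N) := by
  classical
  obtain ⟨hγ0, hγ1⟩ := hγ
  rintro η ⟨hη0, hη1⟩
  -- weights
  set w : {c : Fin n → Fin L // Function.Injective c} → ℝ := fun c => (μ {c}).toReal with hwdef
  have hw : ∀ c, 0 ≤ w c := fun c => ENNReal.toReal_nonneg
  have hμfin : ∀ t : Finset {c : Fin n → Fin L // Function.Injective c}, (μ ↑t).toReal = ∑ c ∈ t, w c := by
    intro t
    have h1 := sum_measure_preimage_singleton (μ := μ) t (f := id)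
      (fun c _ => (Set.toFinite _).measurableSet)
    simp only [Set.preimage_id] at h1
    rw [← h1, ENNReal.toReal_sum (fun c _ => measure_ne_top μ _)]
  have hw1 : ∑ c : {c : Fin n → Fin L // Function.Injective c}, w c = 1 := by
    have h1 := hμfin (univ : Finset {c : Fin n → Fin L // Function.Injective c})
    rw [Finset.coe_univ, measure_univ] at h1
    simpa using h1.symm
  set W : (Fin N → {c : Fin n → Fin L // Function.Injective c}) → ℝ := fun x => ∏ j, w (x j) with hWdef
  have hWnn : ∀ x, 0 ≤ W x := fun x => Finset.prod_nonneg fun j _ => hw (x j)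
  have hW1 : ∑ x : Fin N → {c : Fin n → Fin L // Function.Injective c}, W x = 1 := sum_prod_weights w hw1 N
  set F : (Fin N → {c : Fin n → Fin L // Function.Injective c}) → ℝ := fun x =>
    ((univ.filter (fun i : Fin L => ∃ j k, (x j : Fin n → Fin L) k = i)).card : ℝ)
    with hFdef
  set m : ℝ := γ * n * N / (1 + γ) with hmdef
  set θ : ℝ := η * m with hθdef
  -- event rewrite
  have hZF : ∀ ω, (Z ω : ℝ) = F (fun j => X j ω) := by
    intro ω
    have h1 : {i : Fin L | ∃ j : Fin N, ∃ k : Fin n, (X j ω : Fin n → Fin L) k = i}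
        = ↑(univ.filter (fun i : Fin L => ∃ j k, ((X j ω : Fin n → Fin L)) k = i)) := by
      ext i; simp
    rw [hZ ω, h1, Set.ncard_coe_finset]
  have hPE : (P {ω | (Z ω : ℝ) ≤ θ}).toReal
      = ∑ x ∈ univ.filter (fun x => F x ≤ θ), W x := by
    have hvec : Measurable (fun ω (j : Fin N) => X j ω) :=
      measurable_pi_lambda _ hmeas
    have hEset : {ω | (Z ω : ℝ) ≤ θ}
        = (fun ω (j : Fin N) => X j ω) ⁻¹' ↑(univ.filter fun x => F x ≤ θ) := by
      ext ω
      simp only [Set.mem_setOf_eq, Set.mem_preimage, Finset.coe_filter,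
        Finset.mem_univ, true_and, Set.mem_setOf_eq, hZF ω]
    rw [hEset, ← sum_measure_preimage_singleton _
      (fun x _ => hvec (Set.toFinite _).measurableSet),
      ENNReal.toReal_sum (fun x _ => measure_ne_top P _)]
    refine Finset.sum_congr rfl fun x _ => ?_
    have hset : (fun ω (j : Fin N) => X j ω) ⁻¹' {x} = ⋂ j, X j ⁻¹' {x j} := by
      ext ω
      simp [funext_iff]
    rw [hset, hindep.meas_iInter (fun j => ⟨{x j}, (Set.toFinite _).measurableSet, rfl⟩),
      ENNReal.toReal_prod]
    refine Finset.prod_congr rfl fun j _ => ?_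
    show (P (X j ⁻¹' {x j})).toReal = (μ {x j}).toReal
    rw [← hlaw j, Measure.map_apply (hmeas j) (Set.toFinite _).measurableSet]
  -- bounded differences
  have hbd : ∀ (x : Fin N → {c : Fin n → Fin L // Function.Injective c}) (t : Fin N)
      (c : {c : Fin n → Fin L // Function.Injective c}),
      |F (Function.update x t c) - F x| ≤ (n : ℝ) := by
    have key : ∀ (y : Fin N → {c : Fin n → Fin L // Function.Injective c}) (t : Fin N)
        (c : {c : Fin n → Fin L // Function.Injective c}),
        (univ.filter (fun i : Fin L =>
            ∃ j k, ((Function.update y t c) j : Fin n → Fin L) k = i)).card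
          ≤ (univ.filter (fun i : Fin L => ∃ j k, (y j : Fin n → Fin L) k = i)).card + n := by
      intro y t c
      have hsub : (univ.filter (fun i : Fin L =>
            ∃ j k, ((Function.update y t c) j : Fin n → Fin L) k = i))
          ⊆ (univ.filter (fun i : Fin L => ∃ j k, (y j : Fin n → Fin L) k = i))
            ∪ (univ.image (fun k => ((c : Fin n → Fin L)) k)) := by
        intro i hi
        rw [Finset.mem_filter] at hi
        obtain ⟨-, j, k, hk⟩ := hi
        by_cases hj : j = t
        · subst hj
          rw [Function.update_self] at hk
          exact Finset.mem_union_right _ (Finset.mem_image.mpr ⟨k, Finset.mem_univ _, hk⟩)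
        · rw [Function.update_of_ne hj] at hk
          exact Finset.mem_union_left _ (Finset.mem_filter.mpr ⟨Finset.mem_univ _, j, k, hk⟩)
      calc (univ.filter (fun i : Fin L =>
            ∃ j k, ((Function.update y t c) j : Fin n → Fin L) k = i)).card
          ≤ ((univ.filter (fun i : Fin L => ∃ j k, (y j : Fin n → Fin L) k = i))
            ∪ (univ.image (fun k => ((c : Fin n → Fin L)) k))).card :=
            Finset.card_le_card hsub
        _ ≤ (univ.filter (fun i : Fin L => ∃ j k, (y j : Fin n → Fin L) k = i)).card
            + (univ.image (fun k => ((c : Fin n → Fin L)) k)).card :=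
            Finset.card_union_le _ _
        _ ≤ (univ.filter (fun i : Fin L => ∃ j k, (y j : Fin n → Fin L) k = i)).card + n := by
            have h4 : (univ.image (fun k => ((c : Fin n → Fin L)) k)).card ≤ n := by
              refine le_trans (Finset.card_image_le) ?_
              simp
            omega
    intro x t c
    have h1 := key x t c
    have h2 := key (Function.update x t c) t (x t)
    have h3 : Function.update (Function.update x t c) t (x t) = x := by
      rw [Function.update_idem, Function.update_eq_self]
    rw [h3] at h2
    rw [abs_sub_le_iff]
    constructor
    · have h5 : F (Function.update x t c) ≤ F x + (n:ℝ) := by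
        simp only [hFdef]
        exact_mod_cast h1
      linarith
    · have h5 : F x ≤ F (Function.update x t c) + (n:ℝ) := by
        simp only [hFdef]
        exact_mod_cast h2
      linarith
  -- variance bound
  have hvar : vr W F ≤ N * (n:ℝ) ^ 2 / 2 := efron_stein w hw hw1 (n : ℝ) N F hbd
  -- mean lower bound
  set p0 : ℝ := γ * n / L with hp0def
  have hLpos : (0:ℝ) < L := by exact_mod_cast hL
  have hnpos : (0:ℝ) < n := by exact_mod_cast hn
  have hNpos : (0:ℝ) < N := by exact_mod_cast hN
  have hp0pos : 0 < p0 := by rw [hp0def]; positivity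
  have hnLr : (n:ℝ) ≤ L := by exact_mod_cast hnL
  have hnNL : (n:ℝ) * N ≤ L := by exact_mod_cast hLnN
  have hp0le1 : p0 ≤ 1 := by
    rw [hp0def, div_le_one hLpos]
    nlinarith
  have hNp0 : (N:ℝ) * p0 ≤ γ := by
    rw [hp0def]
    rw [show (N:ℝ) * (γ * n / L) = γ * ((n * N) / L) by ring]
    have h5 : (n:ℝ) * N / L ≤ 1 := by rw [div_le_one hLpos]; exact hnNL
    nlinarith
  set mind : Fin L → {c : Fin n → Fin L // Function.Injective c} → ℝ :=
    fun i c => if ∃ k, (c : Fin n → Fin L) k = i then 0 else 1 with hminddef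
  have hF1 : ∀ x, F x = ∑ i : Fin L, ((1:ℝ) - ∏ j, mind i (x j)) := by
    intro x
    show ((univ.filter (fun i : Fin L => ∃ j k, (x j : Fin n → Fin L) k = i)).card : ℝ) = _
    rw [Finset.card_filter]
    push_cast
    refine Finset.sum_congr rfl fun i _ => ?_
    by_cases h : ∃ j k, (x j : Fin n → Fin L) k = i
    · rw [if_pos h]
      obtain ⟨j, k, hk⟩ := h
      have h6 : ∏ j', mind i (x j') = 0 := by
        refine Finset.prod_eq_zero (Finset.mem_univ j) ?_
        show (if ∃ k, ((x j : Fin n → Fin L)) k = i then (0:ℝ) else 1) = 0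
        exact if_pos ⟨k, hk⟩
      rw [h6]; norm_num
    · rw [if_neg h]
      have h7 : ∀ j' ∈ univ, mind i (x j') = 1 := by
        intro j' _
        show (if ∃ k, ((x j' : Fin n → Fin L)) k = i then (0:ℝ) else 1) = 1
        rw [if_neg]
        rintro ⟨k, hk⟩
        exact h ⟨j', k, hk⟩
      rw [Finset.prod_congr rfl h7, Finset.prod_const_one]
      norm_num
  have hq : ∀ i : Fin L,
      ∑ x : Fin N → {c : Fin n → Fin L // Function.Injective c}, W x * ∏ j, mind i (x j)
        = (∑ c, w c * mind i c) ^ N := by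
    intro i
    have e2 : ∀ x : Fin N → {c : Fin n → Fin L // Function.Injective c},
        W x * ∏ j, mind i (x j) = ∏ j, (w (x j) * mind i (x j)) := by
      intro x
      rw [← Finset.prod_mul_distrib]
    simp only [e2]
    rw [← Fintype.piFinset_univ, ← Finset.prod_univ_sum
      (fun _ : Fin N => (univ : Finset {c : Fin n → Fin L // Function.Injective c}))
      (fun _ c => w c * mind i c)]
    rw [Finset.prod_const, Finset.card_univ, Fintype.card_fin]
  have hqrange : ∀ i : Fin L, 0 ≤ (∑ c, w c * mind i c)
      ∧ (∑ c, w c * mind i c) ≤ 1 - p0 := by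
    intro i
    constructor
    · refine Finset.sum_nonneg fun c _ => mul_nonneg (hw c) ?_
      show (0:ℝ) ≤ if ∃ k, ((c : Fin n → Fin L)) k = i then (0:ℝ) else 1
      split <;> norm_num
    · have hsetEq : {c : {c : Fin n → Fin L // Function.Injective c} |
          ∃ k, (c : Fin n → Fin L) k = i}
          = ↑(univ.filter (fun c : {c : Fin n → Fin L // Function.Injective c} =>
              ∃ k, (c : Fin n → Fin L) k = i)) := by
        ext c; simp
      have hpi : p0 ≤ ∑ c ∈ univ.filter (fun c : {c : Fin n → Fin L // Function.Injective c} =>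
          ∃ k, (c : Fin n → Fin L) k = i), w c := by
        have h8 := hp i
        rw [hsetEq, hμfin] at h8
        exact h8
      have hsplit : (∑ c, w c * mind i c)
          = 1 - ∑ c ∈ univ.filter (fun c : {c : Fin n → Fin L // Function.Injective c} =>
              ∃ k, (c : Fin n → Fin L) k = i), w c := by
        rw [eq_sub_iff_add_eq, Finset.sum_filter, ← Finset.sum_add_distrib, ← hw1]
        refine Finset.sum_congr rfl fun c _ => ?_
        show w c * (if ∃ k, ((c : Fin n → Fin L)) k = i then (0:ℝ) else 1)
            + (if ∃ k, ((c : Fin n → Fin L)) k = i then w c else 0) = w c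
        by_cases h : ∃ k, (c : Fin n → Fin L) k = i
        · rw [if_pos h, if_pos h]; ring
        · rw [if_neg h, if_neg h]; ring
      rw [hsplit]
      linarith
  have hperclass : ∀ i : Fin L,
      (N:ℝ) * p0 / (1 + γ) ≤ 1 - (∑ c, w c * mind i c) ^ N := by
    intro i
    obtain ⟨hq0, hqle⟩ := hqrange i
    set q : ℝ := ∑ c, w c * mind i c with hqdef
    have hA : q ^ N ≤ (1 - p0) ^ N := pow_le_pow_left₀ hq0 hqle N
    have hb : (1:ℝ) + N * p0 ≤ (1 + p0) ^ N := one_add_mul_le_pow (by linarith) N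
    have hprod : (1 - p0) ^ N * (1 + p0) ^ N ≤ 1 := by
      rw [← mul_pow]
      refine pow_le_one₀ (by nlinarith) (by nlinarith)
    have hApos : (0:ℝ) ≤ (1 - p0) ^ N := pow_nonneg (by linarith) N
    have h9 : (1 - p0) ^ N * (1 + N * p0) ≤ 1 :=
      le_trans (mul_le_mul_of_nonneg_left hb hApos) hprod
    have hB0 : (0:ℝ) ≤ (N:ℝ) * p0 := by positivity
    rw [div_le_iff₀ (by linarith : (0:ℝ) < 1 + γ)]
    nlinarith [mul_nonneg hB0 (sub_nonneg.2 hNp0)]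
  have hexF : ex W F = ∑ i : Fin L, (1 - (∑ c, w c * mind i c) ^ N) := by
    rw [ex]
    have e1 : ∀ x : Fin N → {c : Fin n → Fin L // Function.Injective c},
        W x * F x = ∑ i : Fin L, (W x - W x * ∏ j, mind i (x j)) := by
      intro x
      rw [hF1 x, Finset.mul_sum]
      exact Finset.sum_congr rfl fun i _ => by ring
    simp only [e1]
    rw [Finset.sum_comm]
    refine Finset.sum_congr rfl fun i _ => ?_
    rw [Finset.sum_sub_distrib, hW1, hq i]
  have hmean : m ≤ ex W F := by
    rw [hexF, hmdef]
    calc γ * n * N / (1 + γ) = L * ((N:ℝ) * p0 / (1 + γ)) := by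
          rw [hp0def]; field_simp
      _ = ∑ _i : Fin L, (N:ℝ) * p0 / (1 + γ) := by
          rw [Finset.sum_const, Finset.card_univ, Fintype.card_fin, nsmul_eq_mul]
      _ ≤ ∑ i : Fin L, (1 - (∑ c, w c * mind i c) ^ N) :=
          Finset.sum_le_sum fun i _ => hperclass i
  -- combine
  have hm0 : 0 < m := by rw [hmdef]; positivity
  have hθm : θ < m := by
    rw [hθdef]
    nlinarith
  have hθlt : θ < ex W F := lt_of_lt_of_le hθm hmean
  have hch := cheb W F hWnn θ hθlt
  rw [hPE]
  refine le_trans hch ?_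
  have hgap : (1 - η) * m ≤ ex W F - θ := by
    rw [hθdef]; nlinarith
  have hgap0 : 0 < (1 - η) * m := by
    apply mul_pos (by linarith) hm0
  have h1 : vr W F / (ex W F - θ) ^ 2 ≤ (N * (n:ℝ) ^ 2 / 2) / (((1 - η) * m) ^ 2) := by
    exact div_le_div₀ (by positivity) hvar (pow_pos hgap0 2)
      (pow_le_pow_left₀ (le_of_lt hgap0) hgap 2)
  refine le_trans h1 (le_of_eq ?_)
  rw [hmdef]
  have h1γ : (1:ℝ) + γ ≠ 0 := by linarith
  have hγne : γ ≠ 0 := ne_of_gt hγ0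
  have hηne : (1:ℝ) - η ≠ 0 := by linarith
  field_simp
end
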